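/- arXiv:1402.1271 — 4 statements merged into one kernel-verified Lean document; each statement's English description precedes it below -/
import Mathlib

section
/- The Willmore energy of the Willmore torus, obtained by rotating around the z-axis the circle in the xz-plane of center (√2, 0, 0) and radius 1, equals 2π². -/
/-!
On the torus of revolution with radii `R > 1` and `1`, the density `H² dvol` is
`cos θ + (R² / 4) (R + cos θ)⁻¹`, so the energy reduces to the classical integral
`∫₀^{2π} dθ / (R + cos θ) = 2π / √(R² - 1)`, whence `W = π² R² / √(R² - 1)`, equal to `2π²`
at `R = √2`. The integral is evaluated through the primitive
`(θ - 2 arctan (sin θ / (R + √(R² - 1) + cos θ))) / √(R² - 1)`, which, unlike the textbook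
one in `tan (θ / 2)`, is smooth on all of `ℝ`.
-/

open Real intervalIntegral

lemma add_cos_pos {R : ℝ} (hR : 1 < R) (θ : ℝ) : 0 < R + cos θ := by
  linarith [neg_one_le_cos θ]

lemma intervalIntegrable_inv_add_cos {R : ℝ} (hR : 1 < R) (a b : ℝ) :
    IntervalIntegrable (fun θ => (R + cos θ)⁻¹) MeasureTheory.volume a b :=
  ((continuous_const.add continuous_cos).inv₀ fun θ => (add_cos_pos hR θ).ne').intervalIntegrable
    a b

lemma hasDerivAt_primitive_inv_add_cos {R : ℝ} (hR : 1 < R) (θ : ℝ) :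
    HasDerivAt (fun t => (t - 2 * arctan (sin t / (R + √(R ^ 2 - 1) + cos t))) / √(R ^ 2 - 1))
      (R + cos θ)⁻¹ θ := by
  set k := √(R ^ 2 - 1)
  have hk : 0 < k := sqrt_pos.2 (by nlinarith)
  have hk2 : k ^ 2 = R ^ 2 - 1 := sq_sqrt (by nlinarith)
  have hden : 0 < R + k + cos θ := by linarith [add_cos_pos hR θ]
  have hq : HasDerivAt (fun t => sin t / (R + k + cos t))
      ((cos θ * (R + k + cos θ) - sin θ * -sin θ) / (R + k + cos θ) ^ 2) θ :=
    (hasDerivAt_sin θ).div ((hasDerivAt_cos θ).const_add (R + k)) hden.ne'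
  refine (((hasDerivAt_id θ).sub (hq.arctan.const_mul 2)).div_const k).congr_deriv ?_
  have := add_cos_pos hR θ
  field_simp
  linear_combination -(R + k + cos θ) * (sin_sq_add_cos_sq θ + hk2)

theorem integral_inv_add_cos {R : ℝ} (hR : 1 < R) :
    ∫ θ in (0)..(2 * π), (R + cos θ)⁻¹ = 2 * π / √(R ^ 2 - 1) := by
  rw [integral_eq_sub_of_hasDerivAt (fun θ _ => hasDerivAt_primitive_inv_add_cos hR θ)
    (intervalIntegrable_inv_add_cos hR _ _)]
  simp

lemma torus_meanCurvature_sq_mul_eq {R c : ℝ} (h : R + c ≠ 0) :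
    ((R + 2 * c) / (2 * (R + c))) ^ 2 * (R + c) = c + R ^ 2 / 4 * (R + c)⁻¹ := by
  field_simp
  ring

theorem integral_torus_meanCurvature_sq {R : ℝ} (hR : 1 < R) :
    ∫ θ in (0)..(2 * π), ((R + 2 * cos θ) / (2 * (R + cos θ))) ^ 2 * (R + cos θ)
      = π * R ^ 2 / (2 * √(R ^ 2 - 1)) := by
  simp_rw [torus_meanCurvature_sq_mul_eq (add_cos_pos hR _).ne']
  rw [integral_add intervalIntegrable_cos ((intervalIntegrable_inv_add_cos hR _ _).const_mul _),
    integral_const_mul, integral_inv_add_cos hR, integral_cos]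
  simp only [sin_two_pi, sin_zero, sub_zero, zero_add]
  ring

/-- The Willmore energy of the Willmore torus (the torus of revolution with `R = √2`,
`r = 1`): `W = ∫₀^{2π}∫₀^{2π} H(θ)² (√2 + cos θ) dθ dφ` with
`H(θ) = (√2 + 2 cos θ)/(2(√2 + cos θ))` equals `2π²`. -/
theorem stmt_2 :
    (∫ φ in (0:ℝ)..(2 * Real.pi), ∫ θ in (0:ℝ)..(2 * Real.pi),
        ((Real.sqrt 2 + 2 * Real.cos θ) / (2 * (Real.sqrt 2 + Real.cos θ))) ^ 2
          * (Real.sqrt 2 + Real.cos θ))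
      = 2 * Real.pi ^ 2 := by
  rw [integral_torus_meanCurvature_sq one_lt_sqrt_two, integral_const]
  norm_num
  ring
end

section
/- For a torus of revolution in ℝ³ obtained by rotating a circle of radius r around an axis at distance R > r from its center, the Willmore energy equals π² R² / (r √(R² − r²)), and this quantity is minimized over all R > r > 0 exactly when R/r = √2, with minimal value 2π². -/
open Real intervalIntegral

/-!
On a torus of revolution `H² dA = cos θ + R²/(4r) · dθ/(R + r cos θ)` (times `dφ`), so the
Willmore energy reduces to the classical integral `∫₀^{2π} dθ/(a + b cos θ) = 2π/√(a² − b²)`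
and equals `π² R²/(r s)` with `s = √(R² − r²)`. Since `r² + s² = R²`, AM–GM gives
`2 r s ≤ R²`, i.e. the energy is at least `2π²`, with equality iff `s = r`, i.e. `R = √2 r`.
-/

section InvAddMulCos

variable {a b : ℝ}

lemma add_mul_cos_pos (hab : |b| < a) (θ : ℝ) : 0 < a + b * cos θ := by
  have := neg_abs_le (b * cos θ)
  have : |b * cos θ| ≤ |b| := by
    rw [abs_mul]; exact mul_le_of_le_one_right (abs_nonneg b) (abs_cos_le_one θ)
  linarith

/- With `s = √(a² - b²)`, the Weierstrass substitution gives the antiderivative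
`(2/s) arctan(√((a-b)/(a+b)) tan(θ/2))`, which jumps at odd multiples of `π`; this is the same
function corrected by those jumps, hence continuous on all of `ℝ`. -/
lemma hasDerivAt_inv_add_mul_cos_antideriv (hab : |b| < a) (θ : ℝ) :
    HasDerivAt
      (fun θ => (θ - 2 * arctan (b * sin θ / (a + √(a ^ 2 - b ^ 2) + b * cos θ)))
        / √(a ^ 2 - b ^ 2))
      (a + b * cos θ)⁻¹ θ := by
  set s := √(a ^ 2 - b ^ 2)
  have hb2 : b ^ 2 < a ^ 2 := sq_lt_sq' (abs_lt.1 hab).1 (abs_lt.1 hab).2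
  have hs2 : s ^ 2 = a ^ 2 - b ^ 2 := sq_sqrt (by linarith)
  have hs : 0 < s := sqrt_pos.2 (by linarith)
  have hden : 0 < a + b * cos θ := add_mul_cos_pos hab θ
  have hshift : 0 < a + s + b * cos θ := by linarith
  have hquot : HasDerivAt (fun θ => b * sin θ / (a + s + b * cos θ))
      ((b * cos θ * (a + s + b * cos θ) - b * sin θ * (b * -sin θ)) / (a + s + b * cos θ) ^ 2) θ :=
    ((hasDerivAt_sin θ).const_mul b).div
      (((hasDerivAt_cos θ).const_mul b).const_add (a + s)) hshift.ne'
  have hF := ((hasDerivAt_id θ).sub (hquot.arctan.const_mul 2)).div_const s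
  refine hF.congr_deriv ?_
  have : 0 < 1 + (b * sin θ / (a + s + b * cos θ)) ^ 2 := by positivity
  field_simp
  linear_combination -(a + s + b * cos θ) * (b ^ 2 * sin_sq_add_cos_sq θ + hs2)

theorem integral_inv_add_mul_cos (hab : |b| < a) :
    ∫ θ in (0:ℝ)..2 * π, (a + b * cos θ)⁻¹ = 2 * π / √(a ^ 2 - b ^ 2) := by
  have hcont : Continuous fun θ => (a + b * cos θ)⁻¹ :=
    (continuous_const.add (continuous_const.mul continuous_cos)).inv₀
      fun θ => (add_mul_cos_pos hab θ).ne'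
  rw [integral_eq_sub_of_hasDerivAt (fun θ _ => hasDerivAt_inv_add_mul_cos_antideriv hab θ)
    (hcont.intervalIntegrable _ _)]
  simp [sin_two_pi, cos_two_pi]

end InvAddMulCos

section TorusOfRevolution

variable {R r : ℝ}

lemma torus_meanCurvature_sq_mul_area_eq (hr : r ≠ 0) {θ : ℝ} (hθ : R + r * cos θ ≠ 0) :
    ((R + 2 * r * cos θ) / (2 * r * (R + r * cos θ))) ^ 2 * (r * (R + r * cos θ))
      = cos θ + R ^ 2 / (4 * r) * (R + r * cos θ)⁻¹ := by
  field_simp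
  ring

theorem integral_torus_meanCurvature_sq_mul_area (hr : r ≠ 0) (hrR : |r| < R) :
    ∫ θ in (0:ℝ)..2 * π,
        ((R + 2 * r * cos θ) / (2 * r * (R + r * cos θ))) ^ 2 * (r * (R + r * cos θ))
      = π * R ^ 2 / (2 * r * √(R ^ 2 - r ^ 2)) := by
  have hint : IntervalIntegrable (fun θ => R ^ 2 / (4 * r) * (R + r * cos θ)⁻¹)
      MeasureTheory.volume 0 (2 * π) :=
    ((continuous_const.add (continuous_const.mul continuous_cos)).inv₀
      fun θ => (add_mul_cos_pos hrR θ).ne').intervalIntegrable _ _ |>.const_mul _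
  rw [integral_congr fun θ _ => torus_meanCurvature_sq_mul_area_eq hr (add_mul_cos_pos hrR θ).ne',
    integral_add (continuous_cos.intervalIntegrable _ _) hint, integral_cos,
    integral_const_mul, integral_inv_add_mul_cos hrR, sin_two_pi, sin_zero]
  field_simp
  ring

lemma two_mul_mul_sqrt_sq_sub_sq_le (R r : ℝ) : 2 * r * √(R ^ 2 - r ^ 2) ≤ R ^ 2 := by
  rcases le_total (R ^ 2 - r ^ 2) 0 with h | h
  · rw [sqrt_eq_zero_of_nonpos h, mul_zero]
    positivity
  · nlinarith [sq_sqrt h, sq_nonneg (r - √(R ^ 2 - r ^ 2))]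

lemma two_mul_mul_sqrt_sq_sub_sq_eq_iff (hr : 0 < r) (hRr : r < R) :
    2 * r * √(R ^ 2 - r ^ 2) = R ^ 2 ↔ R = √2 * r := by
  have hR : 0 < R := hr.trans hRr
  have hs2 : √(R ^ 2 - r ^ 2) ^ 2 = R ^ 2 - r ^ 2 := sq_sqrt (by nlinarith)
  constructor
  · intro h
    have hsr : √(R ^ 2 - r ^ 2) = r := by nlinarith [sq_nonneg (r - √(R ^ 2 - r ^ 2))]
    rw [← sqrt_sq hR.le, ← sqrt_sq hr.le, ← sqrt_mul zero_le_two]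
    congr 1
    nlinarith
  · rintro rfl
    rw [mul_pow, sq_sqrt zero_le_two, show 2 * r ^ 2 - r ^ 2 = r ^ 2 by ring, sqrt_sq hr.le]
    ring

end TorusOfRevolution

/-- For the torus of revolution of radii `R > r > 0` in `ℝ³`, the Willmore energy
`W = ∫₀^{2π}∫₀^{2π} H² r(R + r cos θ) dθ dφ`, with
`H = (R + 2r cos θ)/(2r(R + r cos θ))`, equals `π² R² / (r √(R² − r²))`; this quantity
is always `≥ 2π²`, with equality exactly when `R = √2 r`. -/
theorem stmt_3 (R r : ℝ) (hr : 0 < r) (hRr : r < R) :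
    (∫ φ in (0:ℝ)..(2 * Real.pi), ∫ θ in (0:ℝ)..(2 * Real.pi),
        ((R + 2 * r * Real.cos θ) / (2 * r * (R + r * Real.cos θ))) ^ 2
          * (r * (R + r * Real.cos θ)))
      = Real.pi ^ 2 * R ^ 2 / (r * Real.sqrt (R ^ 2 - r ^ 2))
    ∧ 2 * Real.pi ^ 2 ≤ Real.pi ^ 2 * R ^ 2 / (r * Real.sqrt (R ^ 2 - r ^ 2))
    ∧ (Real.pi ^ 2 * R ^ 2 / (r * Real.sqrt (R ^ 2 - r ^ 2)) = 2 * Real.pi ^ 2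
        ↔ R = Real.sqrt 2 * r) := by
  have hrs : 0 < r * √(R ^ 2 - r ^ 2) := mul_pos hr (sqrt_pos.2 (by nlinarith))
  have hπ : 0 < π ^ 2 := by positivity
  refine ⟨?_, ?_, ?_⟩
  · rw [integral_const, integral_torus_meanCurvature_sq_mul_area hr.ne' (by rwa [abs_of_pos hr]),
      smul_eq_mul, sub_zero]
    field_simp
  · rw [le_div_iff₀ hrs]
    nlinarith [two_mul_mul_sqrt_sq_sub_sq_le R r]
  · rw [div_eq_iff hrs.ne', ← two_mul_mul_sqrt_sq_sub_sq_eq_iff hr hRr]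
    constructor <;> intro h <;> nlinarith
end

section
/- Every holomorphic quadratic differential on the Riemann sphere ℂP¹ vanishes identically; consequently a conformal minimal immersion of S² into S³ has identically vanishing Weingarten form h⁰ = (n · ∂²_{z²}Φ) dz², and its second fundamental form vanishes identically, so its image is a totally geodesic 2-sphere (Almgren's theorem). -/
open Complex Asymptotics Filter

/-- Every holomorphic quadratic differential on the Riemann sphere vanishes identically:
in the affine chart it is `f(z) dz²` with `f` entire and `f(z) = O(|z|⁻⁴)` as `z → ∞`,
and any such `f` is identically zero.  (This is the key step in Almgren's theorem that a
conformal minimal immersion of `S²` into `S³` has vanishing Weingarten form, hence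
vanishing second fundamental form, so its image is a totally geodesic 2-sphere.) -/
theorem stmt_10 (f : ℂ → ℂ) (hf : Differentiable ℂ f)
    (hdecay : f =O[Bornology.cobounded ℂ] fun z => (‖z‖ ^ 4)⁻¹) :
    ∀ z, f z = 0 := by
  have hg : Tendsto (fun z : ℂ => (‖z‖ ^ 4)⁻¹) (Bornology.cobounded ℂ) (nhds 0) := by
    have : Tendsto (fun z : ℂ => ‖z‖ ^ 4) (Bornology.cobounded ℂ) atTop :=
      (tendsto_pow_atTop (by norm_num)).comp tendsto_norm_cobounded_atTop
    exact this.inv_tendsto_atTop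
  have hft : Tendsto f (cocompact ℂ) (nhds 0) := by
    rw [← Metric.cobounded_eq_cocompact]
    exact hdecay.trans_tendsto hg
  intro z
  exact hf.apply_eq_of_tendsto_cocompact z hft
end

section
/- The total (integral of) curvature of a closed C² curve in ℝⁿ is at least 2π (Fenchel's theorem). -/
/-!
The unit tangent `T = γ'` is a closed curve on the unit sphere whose length is the total curvature
`K`. The angle between two points of `T` is at most the length of the arc of `T` joining them:
subdividing the arc into pieces of length `δ`, each angle exceeds its chord by at most the factor
`1 / √(1 - (δ / 2) ^ 2)`, and the angles add up by the triangle inequality.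
If `K < 2π`, choose `b` halving the length and put `v = T 0 + T b`. Every `T s` is then within
total angle `K / 2 < π` of `T 0` and `T b`, so `⟪T s, v⟫ > 0` for all `s`, which contradicts
`∫₀ᴸ ⟪T s, v⟫ ds = ⟪γ L - γ 0, v⟫ = 0`.
-/

open Real intervalIntegral

open InnerProductGeometry MeasureTheory Filter Set Topology
open scoped RealInnerProductSpace

lemma Real.mul_cos_le_sin {t : ℝ} (h0 : 0 ≤ t) (h1 : t ≤ π / 2) : t * cos t ≤ sin t := by
  rcases h1.lt_or_eq with h1 | rfl
  · have hcos : 0 < cos t := cos_pos_of_mem_Ioo ⟨by linarith [pi_pos], h1⟩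
    have htan := le_tan h0 h1
    rwa [tan_eq_sin_div_cos, le_div_iff₀ hcos] at htan
  · simp

namespace InnerProductGeometry

variable {E : Type*} [NormedAddCommGroup E] [InnerProductSpace ℝ E]

lemma norm_sub_eq_two_mul_sin_angle_div_two {x y : E} (hx : ‖x‖ = 1) (hy : ‖y‖ = 1) :
    ‖x - y‖ = 2 * sin (angle x y / 2) := by
  have hsin : 0 ≤ sin (angle x y / 2) :=
    sin_nonneg_of_nonneg_of_le_pi (by linarith [angle_nonneg x y])
      (by linarith [angle_le_pi x y, pi_pos])
  have hcos : cos (angle x y) = 1 - 2 * sin (angle x y / 2) ^ 2 := by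
    have h2 := cos_sq_add_sin_sq (angle x y / 2)
    conv_lhs => rw [← mul_div_cancel₀ (angle x y) two_ne_zero, cos_two_mul]
    linarith
  refine (sq_eq_sq₀ (norm_nonneg _) (by positivity)).mp ?_
  rw [norm_sub_sq_real, hx, hy, inner_eq_cos_angle_of_norm_eq_one hx hy, hcos]
  ring

lemma angle_mul_sqrt_le_norm_sub {x y : E} (hx : ‖x‖ = 1) (hy : ‖y‖ = 1) {δ : ℝ}
    (h : ‖x - y‖ ≤ δ) : angle x y * √(1 - (δ / 2) ^ 2) ≤ ‖x - y‖ := by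
  have hchord := norm_sub_eq_two_mul_sin_angle_div_two hx hy
  have ht0 : 0 ≤ angle x y / 2 := by linarith [angle_nonneg x y]
  have ht1 : angle x y / 2 ≤ π / 2 := by linarith [angle_le_pi x y]
  set t := angle x y / 2
  have hsin : 0 ≤ sin t := sin_nonneg_of_nonneg_of_le_pi ht0 (by linarith [pi_pos])
  have hcos : √(1 - (δ / 2) ^ 2) ≤ cos t := by
    rw [cos_eq_sqrt_one_sub_sin_sq (by linarith) ht1]
    gcongr
    linarith
  calc angle x y * √(1 - (δ / 2) ^ 2) ≤ angle x y * cos t := by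
        gcongr; exact angle_nonneg x y
    _ = 2 * (t * cos t) := by ring
    _ ≤ 2 * sin t := by gcongr; exact mul_cos_le_sin ht0 ht1
    _ = ‖x - y‖ := hchord.symm

lemma inner_add_pos_of_angle_add_angle_lt_pi {x y z : E} (hx : x ≠ 0) (hy : y ≠ 0)
    (hxz : ‖x‖ = ‖z‖) (h : angle x y + angle y z < π) : 0 < ⟪y, x + z⟫ := by
  have hcos : -cos (angle y x) < cos (angle y z) := by
    rw [← cos_pi_sub]
    refine cos_lt_cos_of_nonneg_of_le_pi (angle_nonneg y z) (by linarith [angle_nonneg y x]) ?_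
    linarith [angle_comm x y]
  rw [inner_add_right, ← cos_angle_mul_norm_mul_norm, ← cos_angle_mul_norm_mul_norm, ← hxz]
  have : 0 < ‖y‖ * ‖x‖ := by positivity
  nlinarith

end InnerProductGeometry

section NormedSpace

variable {E : Type*} [NormedAddCommGroup E] [NormedSpace ℝ E] {f : ℝ → E}

lemma ContDiff.intervalIntegrable_norm_deriv (hf : ContDiff ℝ 1 f) (a b : ℝ) :
    IntervalIntegrable (fun s => ‖deriv f s‖) volume a b :=
  (hf.continuous_deriv le_rfl).norm.intervalIntegrable a b

lemma norm_sub_le_integral_norm_deriv [CompleteSpace E] (hf : ContDiff ℝ 1 f) {a b : ℝ}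
    (hab : a ≤ b) : ‖f b - f a‖ ≤ ∫ s in a..b, ‖deriv f s‖ := by
  rw [← integral_deriv_eq_sub (fun x _ => (hf.differentiable one_ne_zero).differentiableAt)
    ((hf.continuous_deriv le_rfl).intervalIntegrable _ _)]
  exact norm_integral_le_integral_norm hab

end NormedSpace

lemma integral_inner_deriv {E : Type*} [NormedAddCommGroup E] [InnerProductSpace ℝ E]
    {f : ℝ → E} (hf : ContDiff ℝ 1 f) (a b : ℝ) (v : E) :
    ∫ s in a..b, ⟪deriv f s, v⟫ = ⟪f b - f a, v⟫ := by
  rw [inner_sub_left]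
  refine integral_eq_sub_of_hasDerivAt (f := fun s => ⟪f s, v⟫) (fun s _ => ?_) ?_
  · simpa using ((hf.differentiable one_ne_zero) s).hasDerivAt.inner ℝ (hasDerivAt_const s v)
  · exact ((hf.continuous_deriv le_rfl).inner continuous_const).intervalIntegrable _ _

section SphereCurve

variable {E : Type*} [NormedAddCommGroup E] [InnerProductSpace ℝ E] [CompleteSpace E]
  {T : ℝ → E}

lemma angle_mul_sqrt_le_integral_norm_deriv_of_le (hT : ContDiff ℝ 1 T)
    (hu : ∀ s, ‖T s‖ = 1) {a b δ : ℝ} (hab : a ≤ b)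
    (h : ∫ s in a..b, ‖deriv T s‖ ≤ δ) :
    angle (T a) (T b) * √(1 - (δ / 2) ^ 2) ≤ ∫ s in a..b, ‖deriv T s‖ := by
  have hchord := norm_sub_le_integral_norm_deriv hT hab
  rw [norm_sub_rev] at hchord
  exact (angle_mul_sqrt_le_norm_sub (hu a) (hu b) (hchord.trans h)).trans hchord

lemma angle_mul_sqrt_le_integral_norm_deriv (hT : ContDiff ℝ 1 T) (hu : ∀ s, ‖T s‖ = 1)
    {a b δ : ℝ} (hab : a ≤ b) (hδ : 0 < δ) :
    angle (T a) (T b) * √(1 - (δ / 2) ^ 2) ≤ ∫ s in a..b, ‖deriv T s‖ := by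
  have hint := hT.intervalIntegrable_norm_deriv
  obtain ⟨N, hN⟩ := exists_nat_ge ((∫ s in a..b, ‖deriv T s‖) / δ)
  rw [div_le_iff₀ hδ] at hN
  induction N generalizing a with
  | zero =>
    rw [Nat.cast_zero, zero_mul] at hN
    exact angle_mul_sqrt_le_integral_norm_deriv_of_le hT hu hab (hN.trans hδ.le)
  | succ N ih =>
    by_cases hshort : ∫ s in a..b, ‖deriv T s‖ ≤ δ
    · exact angle_mul_sqrt_le_integral_norm_deriv_of_le hT hu hab hshort
    obtain ⟨m, hm, hδm⟩ : ∃ m ∈ Icc a b, ∫ s in a..m, ‖deriv T s‖ = δ :=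
      intermediate_value_Icc hab (continuous_primitive hint a).continuousOn
        ⟨by simpa using hδ.le, (not_le.mp hshort).le⟩
    calc angle (T a) (T b) * √(1 - (δ / 2) ^ 2)
        ≤ (angle (T a) (T m) + angle (T m) (T b)) * √(1 - (δ / 2) ^ 2) := by
          gcongr
          exact angle_le_angle_add_angle _ _ _
      _ ≤ (∫ s in a..m, ‖deriv T s‖) + ∫ s in m..b, ‖deriv T s‖ := by
          rw [add_mul]
          refine add_le_add (angle_mul_sqrt_le_integral_norm_deriv_of_le hT hu hm.1 hδm.le)
            (ih hm.2 ?_)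
          push_cast at hN
          linarith [integral_add_adjacent_intervals (hint a m) (hint m b)]
      _ = ∫ s in a..b, ‖deriv T s‖ := integral_add_adjacent_intervals (hint a m) (hint m b)

theorem angle_le_integral_norm_deriv (hT : ContDiff ℝ 1 T) (hu : ∀ s, ‖T s‖ = 1)
    {a b : ℝ} (hab : a ≤ b) : angle (T a) (T b) ≤ ∫ s in a..b, ‖deriv T s‖ := by
  have hlim : Tendsto (fun δ : ℝ => angle (T a) (T b) * √(1 - (δ / 2) ^ 2)) (𝓝[>] 0)
      (𝓝 (angle (T a) (T b))) := by
    have hcont : Continuous fun δ : ℝ => angle (T a) (T b) * √(1 - (δ / 2) ^ 2) := by fun_prop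
    simpa using (hcont.tendsto 0).mono_left nhdsWithin_le_nhds
  exact le_of_tendsto hlim (eventually_nhdsWithin_of_forall fun δ hδ =>
    angle_mul_sqrt_le_integral_norm_deriv hT hu hab hδ)

lemma angle_add_angle_le_integral_norm_deriv (hT : ContDiff ℝ 1 T) (hu : ∀ s, ‖T s‖ = 1)
    {a s b : ℝ} (has : a ≤ s) (hsb : s ≤ b) :
    angle (T a) (T s) + angle (T s) (T b) ≤ ∫ t in a..b, ‖deriv T t‖ := by
  rw [← integral_add_adjacent_intervals (hT.intervalIntegrable_norm_deriv a s)
    (hT.intervalIntegrable_norm_deriv s b)]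
  exact add_le_add (angle_le_integral_norm_deriv hT hu has) (angle_le_integral_norm_deriv hT hu hsb)

lemma exists_forall_inner_pos_of_integral_norm_deriv_lt_two_pi (hT : ContDiff ℝ 1 T)
    (hu : ∀ s, ‖T s‖ = 1) {L : ℝ} (hL : 0 ≤ L) (hclosed : T L = T 0)
    (hlen : ∫ s in (0:ℝ)..L, ‖deriv T s‖ < 2 * π) :
    ∃ v, ∀ s ∈ Icc 0 L, 0 < ⟪T s, v⟫ := by
  have hint := hT.intervalIntegrable_norm_deriv
  set K := ∫ s in (0:ℝ)..L, ‖deriv T s‖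
  have hK0 : 0 ≤ K := integral_nonneg hL fun s _ => norm_nonneg _
  obtain ⟨b, hb, hbK⟩ : ∃ b ∈ Icc 0 L, ∫ s in (0:ℝ)..b, ‖deriv T s‖ = K / 2 :=
    intermediate_value_Icc hL (continuous_primitive hint 0).continuousOn
      ⟨by simpa using by linarith, by linarith⟩
  have hKb : ∫ s in b..L, ‖deriv T s‖ = K / 2 := by
    linarith [integral_add_adjacent_intervals (hint 0 b) (hint b L)]
  have hne (s : ℝ) : T s ≠ 0 := norm_ne_zero_iff.mp (by rw [hu]; exact one_ne_zero)
  refine ⟨T 0 + T b, fun s hs => inner_add_pos_of_angle_add_angle_lt_pi (hne 0) (hne s)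
    (by rw [hu, hu]) ?_⟩
  rcases le_total s b with hsb | hbs
  · linarith [angle_add_angle_le_integral_norm_deriv hT hu hs.1 hsb]
  · have h := angle_add_angle_le_integral_norm_deriv hT hu hbs hs.2
    rw [hclosed] at h
    linarith [angle_comm (T b) (T s), angle_comm (T s) (T 0)]

end SphereCurve

/-- Fenchel's theorem: the total curvature `∫₀^L |γ''(s)| ds` of a closed `C²` curve in
`ℝⁿ`, parametrized by arc length with length `L`, is at least `2π`. -/
theorem stmt_15 (n : ℕ) (γ : ℝ → EuclideanSpace ℝ (Fin n)) (L : ℝ)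
    (hL : 0 < L) (hsm : ContDiff ℝ 2 γ)
    (hper : Function.Periodic γ L)
    (hunit : ∀ s, ‖deriv γ s‖ = 1) :
    2 * Real.pi ≤ ∫ s in (0:ℝ)..L, ‖deriv (deriv γ) s‖ := by
  have hT : ContDiff ℝ 1 (deriv γ) := hsm.deriv'
  have hclosed : deriv γ L = deriv γ 0 := by
    simpa [deriv_comp_add_const] using congrArg (deriv · 0) (funext hper)
  by_contra! hK
  obtain ⟨v, hv⟩ :=
    exists_forall_inner_pos_of_integral_norm_deriv_lt_two_pi hT hunit hL.le hclosed hK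
  have hzero : ∫ s in (0:ℝ)..L, ⟪deriv γ s, v⟫ = 0 := by
    rw [integral_inner_deriv (hsm.of_le one_le_two), show γ L = γ 0 by simpa using hper 0,
      sub_self, inner_zero_left]
  have hpos : 0 < ∫ s in (0:ℝ)..L, ⟪deriv γ s, v⟫ :=
    intervalIntegral_pos_of_pos_on ((hT.continuous.inner continuous_const).intervalIntegrable _ _)
      (fun s hs => hv s (Ioo_subset_Icc_self hs)) hL
  exact hpos.ne' hzero
end
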